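/- arXiv:1601.06599 — 3 statements merged into one kernel-verified Lean document; each statement's English description precedes it below -/
import Mathlib

section
/- For all integers k, n ≥ 2, the restricted size Ramsey number of the star versus the clique satisfies: r̂*(K_{1,k}, K_n) = C(k(n−1)+1, 2) − C(k, 2) if k ≥ n or k is odd, and r̂*(K_{1,k}, K_n) = C(k(n−1)+1, 2) − k(n−1)/2 otherwise (i.e., when k is even and k < n). -/
open SimpleGraph

/-- `H` contains a copy of `G`, i.e. there is an injective graph homomorphism `G →g H`. -/
def ContainsCopy {α β : Type*} (G : SimpleGraph α) (H : SimpleGraph β) : Prop :=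
  ∃ f : G →g H, Function.Injective f

/-- `F ⟶ (G, H)` : for every red-blue colouring of the edges of `F` (encoded by the red
subgraph `R ≤ F`, the blue edges being `F \ R`) there is a red copy of `G` or a blue copy
of `H`. -/
def Arrows {γ α β : Type*} (F : SimpleGraph γ) (G : SimpleGraph α) (H : SimpleGraph β) : Prop :=
  ∀ R : SimpleGraph γ, R ≤ F → ContainsCopy G R ∨ ContainsCopy H (F \ R)

/-- The Ramsey number `r(G, H)` : the least `n` such that `K_n ⟶ (G, H)`. -/
noncomputable def ramseyNumber {α β : Type*} (G : SimpleGraph α) (H : SimpleGraph β) : ℕ :=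
  sInf {n : ℕ | Arrows (⊤ : SimpleGraph (Fin n)) G H}

/-- The size Ramsey number `r̂(G, H)` : the least number of edges of a graph `F` with
`F ⟶ (G, H)`. -/
noncomputable def sizeRamsey {α β : Type*} (G : SimpleGraph α) (H : SimpleGraph β) : ℕ :=
  sInf {m : ℕ | ∃ (N : ℕ) (F : SimpleGraph (Fin N)), Arrows F G H ∧ F.edgeSet.ncard = m}

/-- The restricted size Ramsey number `r̂*(G, H)` : the least number of edges of a graph `F`
on exactly `r(G, H)` vertices with `F ⟶ (G, H)`. -/
noncomputable def restrictedSizeRamsey {α β : Type*} (G : SimpleGraph α) (H : SimpleGraph β) : ℕ :=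
  sInf {m : ℕ | ∃ F : SimpleGraph (Fin (ramseyNumber G H)),
    Arrows F G H ∧ F.edgeSet.ncard = m}

/-- The star `K_{1,k}` with `k` edges. -/
def starGraph (k : ℕ) : SimpleGraph (Fin 1 ⊕ Fin k) := completeBipartiteGraph (Fin 1) (Fin k)



/-!
Write `N = k(n-1)+1` and let `G` be the graph of edges missing from a host graph `F` on `N`
vertices. If `F ⟶ (K_{1,k}, K_n)`, no `k + 1` vertices span a subgraph of `G` without isolated
vertices: otherwise colour red the edges of `F` inside them and inside `n - 2` further blocks of at
most `k` vertices, so that all red degrees are below `k` while the blue graph is `(n-1)`-partite.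
Such vertex sets grow two vertices at a time, so `G` has at most `k` non-isolated vertices unless
`k` is even and `G` is a matching (for odd `k` start from `∅`, otherwise from a path `w v w'`).
Conversely, both kinds of `G` leave an arrowing complement: if all red degrees are below `k`, a
greedy independent set of the red graph, adjusted to `G`, has `n` vertices, pairwise blue. For a
matching the greedy step removes exactly `k` vertices from an odd set, which stays odd and so
always contains a vertex unmatched inside it. Hence `G` has at most `C(k,2)` edges, or
`k(n-1)/2` when `k` is even, and the larger bound allowed is attained.
-/

open Finset Fintype
open scoped Classical

variable {V : Type*}

def NoIsolatedOn (G : SimpleGraph V) (s : Finset V) : Prop := ∀ v ∈ s, ∃ w ∈ s, G.Adj v w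

lemma NoIsolatedOn.insert_insert {G : SimpleGraph V} {s : Finset V} (hs : NoIsolatedOn G s)
    {u v : V} (h : G.Adj v u) : NoIsolatedOn G (insert v (insert u s)) := by
  intro x hx
  rcases mem_insert.1 hx with rfl | hx
  · exact ⟨u, by simp, h⟩
  rcases mem_insert.1 hx with rfl | hx
  · exact ⟨v, by simp, h.symm⟩
  obtain ⟨w, hw, hxw⟩ := hs x hx
  exact ⟨w, by simp [hw], hxw⟩

lemma exists_isIndepSet_dominating (R : SimpleGraph V) (X : Finset V) :
    ∃ I ⊆ X, R.IsIndepSet I ∧ ∀ v ∈ X, v ∈ I ∨ ∃ w ∈ I, R.Adj w v := by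
  set 𝒜 := X.powerset.filter fun I : Finset V => R.IsIndepSet (I : Set V)
  obtain ⟨I, -, hI⟩ := 𝒜.exists_le_maximal (a := ∅) (by simp [𝒜])
  obtain ⟨hIX, hIind⟩ : I ⊆ X ∧ R.IsIndepSet I := by simpa [𝒜] using hI.prop
  refine ⟨I, hIX, hIind, fun v hv => or_iff_not_imp_right.2 fun hnot => ?_⟩
  have hmem : insert v I ∈ 𝒜 := by
    simp only [𝒜, mem_filter, mem_powerset, insert_subset_iff, coe_insert]
    exact ⟨⟨hv, hIX⟩, hIind.insert fun w hw _ => ⟨fun h => hnot ⟨w, hw, h.symm⟩,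
      fun h => hnot ⟨w, hw, h⟩⟩⟩
  exact hI.eq_of_le hmem (subset_insert v I) ▸ mem_insert_self v I

lemma containsCopy_top_of_isNClique {n : ℕ} {B : SimpleGraph V} {s : Finset V}
    (h : B.IsNClique n s) : ContainsCopy (⊤ : SimpleGraph (Fin n)) B := by
  obtain ⟨c⟩ := (not_cliqueFree_iff_top_isContained n).1 fun hB => hB s h
  exact ⟨c.toHom, c.injective⟩

variable [Fintype V]

lemma containsCopy_starGraph_iff {k : ℕ} (R : SimpleGraph V) :
    ContainsCopy (_root_.starGraph k) R ↔ ∃ v, k ≤ R.degree v := by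
  constructor
  · rintro ⟨f, hf⟩
    refine ⟨f (.inl 0), ?_⟩
    rw [← card_neighborFinset_eq_degree]
    calc k = #(univ.map ⟨f ∘ Sum.inr, hf.comp Sum.inr_injective⟩) := by simp
      _ ≤ _ := card_le_card fun w hw => by
        obtain ⟨i, -, rfl⟩ := mem_map.1 hw
        exact (mem_neighborFinset _ _ _).2 (f.map_adj (by simp [_root_.starGraph]))
  · rintro ⟨v, hv⟩
    rw [← card_neighborFinset_eq_degree] at hv
    obtain ⟨t, ht, rfl⟩ := exists_subset_card_eq hv
    obtain ⟨c⟩ := (completeBipartiteGraph_isContained_iff (α := Fin 1) (β := Fin #t)).2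
      ⟨{v}, t, by simp, by simp, fun a ha b hb => by
        rw [coe_singleton, Set.mem_singleton_iff] at ha
        exact ha ▸ (mem_neighborFinset _ _ _).1 (ht hb)⟩
    exact ⟨c.toHom, c.injective⟩

section LowerBound

variable {k n : ℕ}

/-- Colour red the edges of `F` inside the parts of `π`; a blue `K_n` would need `n` parts. -/
lemma not_arrows_of_partition {ι : Type*} [Fintype ι] (hι : card ι < n) (F : SimpleGraph V)
    (π : V → ι) (hπ : ∀ v, #{w | F.Adj v w ∧ π w = π v} < k) :
    ¬ Arrows F (_root_.starGraph k) (⊤ : SimpleGraph (Fin n)) := by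
  intro harr
  rcases harr (F \ (⊤ : SimpleGraph ι).comap π) sdiff_le with hred | ⟨f, -⟩
  · obtain ⟨v, hv⟩ := (containsCopy_starGraph_iff _).1 hred
    refine (hπ v).not_ge (hv.trans ?_)
    rw [← card_neighborFinset_eq_degree]
    refine card_le_card fun w hw => ?_
    simp only [mem_neighborFinset, sdiff_adj, comap_adj, top_adj, not_not] at hw
    simp [hw.1, hw.2]
  · refine hι.not_ge (Fintype.card_fin n ▸ card_le_of_injective (π ∘ f) fun i j hij => ?_)
    by_contra hne
    have := f.map_adj ((top_adj _ _).2 hne)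
    simp only [sdiff_adj, comap_adj, top_adj, not_and, not_not] at this
    exact this.2 this.1 hij

lemma exists_fiber_card_le {α : Type*} [Fintype α] {m : ℕ} (h : card α ≤ m * k) :
    ∃ π : α → Fin m, ∀ i, #{a | π a = i} ≤ k := by
  obtain ⟨e⟩ := Function.Embedding.nonempty_of_card_le (β := Fin m × Fin k) (by simpa using h)
  refine ⟨fun a => (e a).1, fun i => ?_⟩
  simpa using card_le_card_of_injOn (t := univ) (fun a => (e a).2) (by simp)
    fun a ha b hb hab =>
      e.injective (Prod.ext ((mem_filter.1 ha).2.trans (mem_filter.1 hb).2.symm) hab)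

lemma not_arrows_of_sparse_part (hn : 2 ≤ n) (F : SimpleGraph V) (T : Finset V)
    (hT : ∀ v ∈ T, #{w ∈ T | F.Adj v w} < k) (hTc : #Tᶜ ≤ k * (n - 1) - k) :
    ¬ Arrows F (_root_.starGraph k) (⊤ : SimpleGraph (Fin n)) := by
  obtain ⟨π, hπ⟩ := exists_fiber_card_le (α := {v // v ∉ T}) (m := n - 2) (k := k)
    (by
      rw [Fintype.card_subtype_compl, Fintype.card_coe, ← card_compl]
      have : k * (n - 1) = (n - 2) * k + k := by rw [mul_comm, ← Nat.succ_mul]; congr 1; omega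
      omega)
  refine not_arrows_of_partition (ι := Option (Fin (n - 2))) (by simp; omega) F
    (fun v => if hv : v ∈ T then none else some (π ⟨v, hv⟩)) fun v => ?_
  by_cases hv : v ∈ T
  · refine lt_of_le_of_lt (card_le_card fun w hw => ?_) (hT v hv)
    simp only [hv, dite_true, mem_filter, mem_univ, true_and] at hw ⊢
    split_ifs at hw with hw' <;> simp_all
  · calc _ ≤ #(({a | π a = π ⟨v, hv⟩} : Finset _).erase ⟨v, hv⟩) := by
          refine card_le_card_of_injOn (fun w => if hw : w ∈ T then ⟨v, hv⟩ else ⟨w, hw⟩)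
            (fun w hw => ?_) (fun a ha b hb hab => ?_)
          · simp only [hv, dite_false, mem_coe, mem_filter, mem_univ, true_and] at hw
            split_ifs at hw with hw'
            · simp at hw
            · simp only [Option.some.injEq] at hw
              simp [dif_neg hw', hw.2, hw.1.ne']
          · simp only [hv, dite_false, coe_filter, mem_univ, true_and, Set.mem_ofPred_eq] at ha hb
            split_ifs at ha hb hab with ha' hb' hb' <;> simp_all
      _ < k := by
          rw [card_erase_of_mem (by simp)]
          exact lt_of_lt_of_le (Nat.sub_lt (card_pos.2 ⟨⟨v, hv⟩, by simp⟩) one_pos) (hπ _)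

lemma not_arrows_top (hn : 2 ≤ n) (hV : card V ≤ k * (n - 1)) :
    ¬ Arrows (⊤ : SimpleGraph V) (_root_.starGraph k) (⊤ : SimpleGraph (Fin n)) := by
  obtain ⟨T, -, hT⟩ := exists_subset_card_eq (s := (univ : Finset V)) (min_le_right k _)
  refine not_arrows_of_sparse_part hn ⊤ T (fun v hv => ?_) ?_
  · calc _ ≤ #(T.erase v) := card_le_card fun w hw => by simp_all [eq_comm]
      _ < k := by rw [card_erase_of_mem hv]; have := card_pos.2 ⟨v, hv⟩; omega
  · rw [card_compl, hT, card_univ]; omega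

lemma Arrows.not_noIsolatedOn_compl (hn : 2 ≤ n) (hV : card V ≤ k * (n - 1) + 1)
    {F : SimpleGraph V} (harr : Arrows F (_root_.starGraph k) (⊤ : SimpleGraph (Fin n)))
    {T : Finset V} (hT : #T = k + 1) : ¬ NoIsolatedOn Fᶜ T := by
  intro hiso
  refine not_arrows_of_sparse_part hn F T (fun v hv => ?_) ?_ harr
  · obtain ⟨u, hu, hvu, hFvu⟩ := hiso v hv
    calc _ ≤ #((T.erase v).erase u) := card_le_card fun w hw => by
          simp only [mem_filter] at hw
          simp only [mem_erase]
          exact ⟨fun h => hFvu (h ▸ hw.2), hw.2.ne', hw.1⟩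
      _ < k := by
          rw [card_erase_of_mem (mem_erase.2 ⟨hvu.symm, hu⟩), card_erase_of_mem hv]
          have := one_lt_card.2 ⟨v, hv, u, hu, hvu⟩
          omega
  · rw [card_compl, hT]; omega

end LowerBound

section NoIsolated

variable {G : SimpleGraph V} {s : Finset V}

lemma exists_adj_notMem_of_card_lt_ncard_support {t : Finset V} (h : #t < G.support.ncard) :
    ∃ v ∉ t, ∃ u, G.Adj v u := by
  obtain ⟨v, hv, hvt⟩ := Set.exists_mem_notMem_of_ncard_lt_ncard (s := (t : Set V))
    (t := G.support) (by rwa [Set.ncard_coe_finset])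
  exact ⟨v, hvt, (mem_support G).1 hv⟩

lemma NoIsolatedOn.exists_card_add_two (hs : NoIsolatedOn G s)
    (h : #s + 2 ≤ G.support.ncard) : ∃ t, NoIsolatedOn G t ∧ #t = #s + 2 := by
  obtain ⟨v, hv, u, hvu⟩ := exists_adj_notMem_of_card_lt_ncard_support (G := G) (t := s) (by omega)
  by_cases hu : u ∈ s
  · have hs₁ := hs.insert_insert hvu
    rw [insert_eq_of_mem hu] at hs₁
    obtain ⟨v', hv', u', hvu'⟩ :=
      exists_adj_notMem_of_card_lt_ncard_support (G := G) (t := insert v s)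
        (by rw [card_insert_of_notMem hv]; omega)
    by_cases hu' : u' ∈ insert v s
    · refine ⟨_, hs₁.insert_insert hvu', ?_⟩
      rw [insert_eq_of_mem hu', card_insert_of_notMem hv', card_insert_of_notMem hv]
    · refine ⟨_, hs.insert_insert hvu', ?_⟩
      rw [mem_insert, not_or] at hu' hv'
      rw [card_insert_of_notMem (by simp [hvu'.ne, hv'.2]), card_insert_of_notMem hu'.2]
  · refine ⟨_, hs.insert_insert hvu, ?_⟩
    rw [card_insert_of_notMem (by simp [hvu.ne, hv]), card_insert_of_notMem hu]

lemma NoIsolatedOn.exists_card_add_two_mul (hs : NoIsolatedOn G s) (j : ℕ)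
    (h : #s + 2 * j ≤ G.support.ncard) : ∃ t, NoIsolatedOn G t ∧ #t = #s + 2 * j := by
  induction j with
  | zero => exact ⟨s, hs, rfl⟩
  | succ j ih =>
    obtain ⟨t, ht, htc⟩ := ih (by omega)
    obtain ⟨t', ht', ht'c⟩ := ht.exists_card_add_two (by omega)
    exact ⟨t', ht', by omega⟩

lemma ncard_support_le_of_forall_not_noIsolatedOn {k j : ℕ}
    (hfree : ∀ T : Finset V, #T = k + 1 → ¬ NoIsolatedOn G T) (hs : NoIsolatedOn G s)
    (hsk : #s + 2 * j = k + 1) : G.support.ncard ≤ k := by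
  by_contra! hk
  obtain ⟨t, ht, htc⟩ := hs.exists_card_add_two_mul j (by omega)
  exact hfree t (by omega) ht

end NoIsolated

lemma ncard_edgeSet_le_choose_two {G : SimpleGraph V} {k : ℕ} (h : G.support.ncard ≤ k) :
    G.edgeSet.ncard ≤ k.choose 2 := by
  rw [← coe_edgeFinset, Set.ncard_coe_finset, ← card_edgeFinset_induce_support]
  refine card_edgeFinset_le_card_choose_two.trans (Nat.choose_le_choose 2 ?_)
  rwa [Fintype.card_eq_nat_card, Nat.card_coe_set_eq]

lemma two_mul_ncard_edgeSet_le {G : SimpleGraph V}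
    (hG : ∀ v, (G.neighborSet v).Subsingleton) : 2 * G.edgeSet.ncard ≤ card V := by
  rw [← coe_edgeFinset, Set.ncard_coe_finset, ← sum_degrees_eq_twice_card_edges]
  refine (sum_le_sum fun v _ => (?_ : G.degree v ≤ 1)).trans (by simp)
  rw [← card_neighborFinset_eq_degree, card_le_one]
  intro a ha b hb
  exact hG v ((mem_neighborFinset _ _ _).1 ha) ((mem_neighborFinset _ _ _).1 hb)

lemma ncard_edgeSet_compl (G : SimpleGraph V) :
    Gᶜ.edgeSet.ncard = (card V).choose 2 - G.edgeSet.ncard := by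
  rw [← top_sdiff, edgeSet_sdiff, Set.ncard_sdiff (edgeSet_mono le_top), ← coe_edgeFinset,
    Set.ncard_coe_finset, card_edgeFinset_top_eq_card_choose_two]

lemma arrows_compl_of_forall_degree_lt {G : SimpleGraph V} {k n : ℕ}
    (h : ∀ R : SimpleGraph V, (∀ v, R.degree v < k) →
      ∃ s : Finset V, n ≤ #s ∧ (G ⊔ R).IsIndepSet s) :
    Arrows Gᶜ (_root_.starGraph k) (⊤ : SimpleGraph (Fin n)) := by
  intro R _
  by_cases hdeg : ∃ v, k ≤ R.degree v
  · exact .inl ((containsCopy_starGraph_iff R).2 hdeg)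
  · obtain ⟨s, hs, hind⟩ := h R (by simpa using hdeg)
    obtain ⟨t, hts, rfl⟩ := exists_subset_card_eq hs
    have : (Gᶜ \ R).IsClique (t : Set V) := by
      rw [← isIndepSet_compl, sdiff_eq, compl_inf, compl_compl, compl_compl]
      exact Set.Pairwise.mono (coe_subset.2 hts) hind
    exact .inr (containsCopy_top_of_isNClique ⟨this, rfl⟩)

section Independence

variable {R : SimpleGraph V} {k : ℕ}

lemma card_le_mul_card_of_dominates (hR : ∀ v, R.degree v < k) {X I : Finset V}
    (hX : ∀ v ∈ X, v ∈ I ∨ ∃ w ∈ I, R.Adj w v) : #X ≤ k * #I := by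
  rw [mul_comm]
  refine (card_le_card fun v hv => ?_).trans
    (card_biUnion_le_card_mul I (fun w => insert w (R.neighborFinset w)) k fun w _ => ?_)
  · rcases hX v hv with hvI | ⟨w, hw, hwv⟩
    · exact mem_biUnion.2 ⟨v, hvI, mem_insert_self v _⟩
    · exact mem_biUnion.2 ⟨w, hw, mem_insert_of_mem ((mem_neighborFinset _ _ _).2 hwv)⟩
  · exact (card_insert_le _ _).trans (by rw [card_neighborFinset_eq_degree]; exact hR w)

lemma exists_isIndepSet_sup_of_ncard_support_le {G : SimpleGraph V} {n : ℕ}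
    (hR : ∀ v, R.degree v < k) (hG : G.support.ncard ≤ k) (hV : k * (n - 1) < card V) :
    ∃ I : Finset V, n ≤ #I ∧ (G ⊔ R).IsIndepSet I := by
  set S := G.support.toFinset
  have hGS : ∀ v ∉ S, ∀ w, ¬ G.Adj v w := fun v hv w h => hv (by simpa [S] using ⟨w, h⟩)
  obtain ⟨I, hIS, hIind, hIdom⟩ := exists_isIndepSet_dominating R Sᶜ
  have hIS' : ∀ v ∈ I, v ∉ S := fun v hv => mem_compl.1 (hIS hv)
  have hI : (G ⊔ R).IsIndepSet I := fun u hu w hw huw => by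
    simp only [sup_adj, not_or]; exact ⟨hGS u (hIS' u hu) w, hIind hu hw huw⟩
  have hcompl : #Sᶜ ≤ k * #I := card_le_mul_card_of_dominates hR hIdom
  have hS : #S ≤ k := by rwa [← Set.ncard_eq_toFinset_card']
  by_cases hfree : ∃ s ∈ S, ∀ w ∈ I, ¬ R.Adj w s
  · obtain ⟨s, hs, hsI⟩ := hfree
    refine ⟨insert s I, ?_, ?_⟩
    · rw [card_insert_of_notMem fun h => hIS' s h hs]
      have : card V ≤ k * (#I + 1) := by rw [← card_add_card_compl S, mul_add]; omega
      have := Nat.lt_of_mul_lt_mul_left (hV.trans_le this)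
      omega
    · rw [coe_insert]
      refine hI.insert fun w hw _ => ?_
      simp only [sup_adj, not_or]
      exact ⟨⟨fun h => hGS w (hIS' w hw) s h.symm, fun h => hsI w hw h.symm⟩,
        hGS w (hIS' w hw) s, hsI w hw⟩
  · refine ⟨I, ?_, hI⟩
    have : card V ≤ k * #I := by
      refine card_univ (α := V) ▸ card_le_mul_card_of_dominates hR fun v _ => ?_
      by_cases hv : v ∈ S
      · simp only [not_exists, not_and, not_forall, not_not] at hfree
        obtain ⟨w, hw, hwv⟩ := hfree v hv
        exact .inr ⟨w, hw, hwv⟩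
      · exact hIdom v (mem_compl.2 hv)
    have := Nat.lt_of_mul_lt_mul_left (hV.trans_le this)
    omega

lemma exists_forall_not_adj_of_odd_card {G : SimpleGraph V}
    (hG : ∀ v, (G.neighborSet v).Subsingleton) {s : Finset V} (hs : Odd #s) :
    ∃ w ∈ s, ∀ u ∈ s, ¬ G.Adj w u := by
  by_contra! h
  have hM : ((⊤ : G.Subgraph).induce (s : Set V)).IsMatching := by
    intro v hv
    rw [Subgraph.induce_verts, mem_coe] at hv
    obtain ⟨w, hw, hvw⟩ := h v hv
    exact ⟨w, by simp [hv, hw, hvw], fun u hu => hG v (by simpa using hu.2.2) hvw⟩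
  have := hM.even_card
  simp only [Subgraph.induce_verts, toFinset_coe] at this
  exact Nat.not_even_iff_odd.2 hs this

lemma exists_isIndepSet_sup_of_odd_card {G : SimpleGraph V} (hk : Even k)
    (hR : ∀ v, R.degree v < k) (hG : ∀ v, (G.neighborSet v).Subsingleton)
    (s : Finset V) (hs : Odd #s) : ∃ I ⊆ s, (G ⊔ R).IsIndepSet I ∧ #s ≤ k * #I := by
  induction s using Finset.strongInduction with
  | H s ih =>
  obtain ⟨w, hws, hw⟩ := exists_forall_not_adj_of_odd_card hG hs
  by_cases hsk : #s ≤ k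
  · exact ⟨{w}, by simpa using hws, by simp, by simpa using hsk⟩
  have hT₀ : #(insert w (s.filter (R.Adj w))) ≤ k := by
    refine (card_insert_le _ _).trans (Nat.succ_le_of_lt ?_)
    calc _ ≤ #(R.neighborFinset w) := card_le_card fun u hu => by simp_all
      _ < k := by rw [card_neighborFinset_eq_degree]; exact hR w
  -- pad `w` and its red neighbours to exactly `k` vertices, so that the rest stays odd
  obtain ⟨T, hT₀T, hTs, hTk⟩ :=
    exists_subsuperset_card_eq (insert_subset hws (filter_subset _ s)) hT₀ (by omega)
  have hwT : w ∈ T := hT₀T (mem_insert_self _ _)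
  obtain ⟨I, hIs, hI, hcard⟩ := ih (s \ T) (sdiff_ssubset hTs ⟨w, hwT⟩)
    (by rw [card_sdiff_of_subset hTs, hTk]; exact Nat.Odd.sub_even (by omega) hs hk)
  have hwI : w ∉ I := fun h => (mem_sdiff.1 (hIs h)).2 hwT
  refine ⟨insert w I, insert_subset hws (hIs.trans sdiff_subset), ?_, ?_⟩
  · rw [coe_insert]
    refine hI.insert fun u hu _ => ?_
    have hu' := mem_sdiff.1 (hIs hu)
    have hRwu : ¬ R.Adj w u := fun h => hu'.2 (hT₀T (mem_insert_of_mem (mem_filter.2 ⟨hu'.1, h⟩)))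
    simp only [sup_adj, not_or]
    exact ⟨⟨hw u hu'.1, hRwu⟩, fun h => hw u hu'.1 h.symm, fun h => hRwu h.symm⟩
  · rw [card_sdiff_of_subset hTs, hTk] at hcard
    rw [card_insert_of_notMem hwI, mul_add_one]
    omega

end Independence

section Arrowing

variable {G : SimpleGraph V} {k n : ℕ}

lemma arrows_compl_of_ncard_support_le (hV : k * (n - 1) < card V) (hG : G.support.ncard ≤ k) :
    Arrows Gᶜ (_root_.starGraph k) (⊤ : SimpleGraph (Fin n)) :=
  arrows_compl_of_forall_degree_lt fun _ hR => exists_isIndepSet_sup_of_ncard_support_le hR hG hV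

lemma arrows_compl_of_subsingleton_neighbors (hk : Even k) (hV : card V = k * (n - 1) + 1)
    (hG : ∀ v, (G.neighborSet v).Subsingleton) :
    Arrows Gᶜ (_root_.starGraph k) (⊤ : SimpleGraph (Fin n)) := by
  refine arrows_compl_of_forall_degree_lt fun R hR => ?_
  obtain ⟨I, -, hI, hcard⟩ := exists_isIndepSet_sup_of_odd_card hk hR hG univ
    (by rw [card_univ, hV]; exact (hk.mul_right _).add_one)
  rw [card_univ, hV] at hcard
  exact ⟨I, by have := Nat.lt_of_mul_lt_mul_left (Nat.lt_of_succ_le hcard); omega, hI⟩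

lemma ncard_support_le_or_of_arrows_compl (hk : 2 ≤ k) (hn : 2 ≤ n)
    (hV : card V ≤ k * (n - 1) + 1)
    (harr : Arrows Gᶜ (_root_.starGraph k) (⊤ : SimpleGraph (Fin n))) :
    G.support.ncard ≤ k ∨ Even k ∧ ∀ v, (G.neighborSet v).Subsingleton := by
  have hfree (T : Finset V) (hT : #T = k + 1) : ¬ NoIsolatedOn G T :=
    compl_compl G ▸ harr.not_noIsolatedOn_compl hn hV hT
  rcases Nat.even_or_odd k with ⟨m, rfl⟩ | ⟨m, rfl⟩
  · by_cases hG : ∀ v, (G.neighborSet v).Subsingleton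
    · exact .inr ⟨⟨m, rfl⟩, hG⟩
    simp only [Set.Subsingleton, mem_neighborSet, not_forall] at hG
    obtain ⟨v, w, hvw, w', hvw', hww'⟩ := hG
    refine .inl (ncard_support_le_of_forall_not_noIsolatedOn hfree (s := {v, w, w'})
      (j := m - 1) (fun x hx => ?_) ?_)
    · simp only [mem_insert, mem_singleton] at hx
      rcases hx with rfl | rfl | rfl
      · exact ⟨w, by simp, hvw⟩
      · exact ⟨v, by simp, hvw.symm⟩
      · exact ⟨v, by simp, hvw'.symm⟩
    · rw [card_insert_of_notMem (by simp [hvw.ne, hvw'.ne]), card_pair hww']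
      omega
  · exact .inl (ncard_support_le_of_forall_not_noIsolatedOn hfree (s := ∅) (j := m + 1)
      (by simp [NoIsolatedOn]) (by simp; ring))

end Arrowing

def missingEdgeBound (k n : ℕ) : ℕ := if n ≤ k ∨ Odd k then k.choose 2 else k * (n - 1) / 2

lemma ncard_edgeSet_le_of_arrows_compl {G : SimpleGraph V} {k n : ℕ} (hk : 2 ≤ k)
    (hn : 2 ≤ n) (hV : card V = k * (n - 1) + 1)
    (harr : Arrows Gᶜ (_root_.starGraph k) (⊤ : SimpleGraph (Fin n))) :
    G.edgeSet.ncard ≤ missingEdgeBound k n := by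
  unfold missingEdgeBound
  rcases ncard_support_le_or_of_arrows_compl hk hn hV.le harr with hsupp | ⟨⟨m, rfl⟩, hG⟩
  · refine (ncard_edgeSet_le_choose_two hsupp).trans ?_
    split_ifs with h
    · rfl
    · rw [Nat.choose_two_right]
      exact Nat.div_le_div_right (Nat.mul_le_mul_left _ (by omega))
  · have h2 := two_mul_ncard_edgeSet_le hG
    have hE : G.edgeSet.ncard ≤ (m + m) * (n - 1) / 2 := by
      have : (m + m) * (n - 1) = 2 * (m * (n - 1)) := by ring
      omega
    split_ifs with h
    · have hnk : n ≤ m + m := h.resolve_right (Nat.not_odd_iff_even.2 ⟨m, rfl⟩)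
      rw [Nat.choose_two_right]
      exact hE.trans (Nat.div_le_div_right (Nat.mul_le_mul_left _ (by omega)))
    · exact hE

def pairingGraph (N : ℕ) : SimpleGraph (Fin N) := SimpleGraph.fromRel fun v w => v.val / 2 = w.val / 2

lemma pairingGraph_neighborSet_subsingleton {N : ℕ} (v : Fin N) :
    ((pairingGraph N).neighborSet v).Subsingleton := by
  intro w hw w' hw'
  simp only [mem_neighborSet, pairingGraph, fromRel_adj, ne_eq, Fin.ext_iff] at hw hw'
  exact Fin.ext (by omega)

lemma le_ncard_edgeSet_pairingGraph (N : ℕ) : N / 2 ≤ (pairingGraph N).edgeSet.ncard := by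
  have hi (i : Fin (N / 2)) : 2 * i.val + 1 < N := by omega
  simpa using Set.ncard_le_ncard_of_injOn (s := (Set.univ : Set (Fin (N / 2))))
    (fun i => s(⟨2 * i, (Nat.lt_succ_self _).trans (hi i)⟩, ⟨2 * i + 1, hi i⟩))
    (fun i _ => by simp [pairingGraph, Fin.ext_iff]; omega)
    (fun i _ j _ hij => by
      simp only [Sym2.eq_iff, Fin.mk.injEq] at hij
      exact Fin.ext (by omega))

lemma exists_arrows_compl {k n : ℕ} (hn : 2 ≤ n) :
    ∃ G : SimpleGraph (Fin (k * (n - 1) + 1)), missingEdgeBound k n ≤ G.edgeSet.ncard ∧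
      Arrows Gᶜ (_root_.starGraph k) (⊤ : SimpleGraph (Fin n)) := by
  unfold missingEdgeBound
  split_ifs with h
  · have hkN : k ≤ k * (n - 1) + 1 := Nat.le_succ_of_le (Nat.le_mul_of_pos_right k (by omega))
    refine ⟨(⊤ : SimpleGraph (Fin k)).map (Fin.castLEEmb hkN), ?_,
      arrows_compl_of_ncard_support_le (by simp) ?_⟩
    · rw [edgeSet_map, Set.ncard_image_of_injective _ (Fin.castLEEmb hkN).sym2Map.injective,
        ← coe_edgeFinset, Set.ncard_coe_finset, card_edgeFinset_top_eq_card_choose_two,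
        Fintype.card_fin]
    · refine (Set.ncard_le_ncard (t := Set.range (Fin.castLEEmb hkN)) ?_).trans_eq
        (by rw [Set.ncard_range_of_injective (Fin.castLEEmb hkN).injective, Nat.card_fin])
      rintro v ⟨w, -, a, b, -, rfl, -⟩
      exact ⟨a, rfl⟩
  · obtain ⟨m, rfl⟩ := Nat.not_odd_iff_even.1 (not_or.1 h).2
    refine ⟨pairingGraph _, (le_ncard_edgeSet_pairingGraph _).trans' ?_,
      arrows_compl_of_subsingleton_neighbors ⟨m, rfl⟩ (Fintype.card_fin _)
        pairingGraph_neighborSet_subsingleton⟩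
    omega

lemma ramseyNumber_starGraph_top {k n : ℕ} (hn : 2 ≤ n) :
    ramseyNumber (_root_.starGraph k) (⊤ : SimpleGraph (Fin n)) = k * (n - 1) + 1 := by
  have harr : Arrows (⊤ : SimpleGraph (Fin (k * (n - 1) + 1))) (_root_.starGraph k)
      (⊤ : SimpleGraph (Fin n)) := by
    rw [← compl_bot]
    exact arrows_compl_of_ncard_support_le (by simp) (by simp)
  refine le_antisymm (Nat.sInf_le harr) (le_csInf ⟨_, harr⟩ fun m hm => ?_)
  by_contra! hlt
  exact not_arrows_top hn (by simpa using Nat.le_of_lt_succ hlt) hm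

theorem stmt4 (k n : ℕ) (hk : 2 ≤ k) (hn : 2 ≤ n) :
    restrictedSizeRamsey (_root_.starGraph k) (⊤ : SimpleGraph (Fin n)) =
      if n ≤ k ∨ Odd k then (k*(n-1)+1).choose 2 - k.choose 2
      else (k*(n-1)+1).choose 2 - k*(n-1)/2 := by
  have hV := Fintype.card_fin (k * (n - 1) + 1)
  rw [show ite _ _ _ = (k * (n - 1) + 1).choose 2 - missingEdgeBound k n by
    unfold missingEdgeBound; split_ifs <;> rfl]
  rw [restrictedSizeRamsey, ramseyNumber_starGraph_top hn]
  obtain ⟨G, hG, hGarr⟩ := exists_arrows_compl (k := k) hn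
  have hGmax := ncard_edgeSet_le_of_arrows_compl hk hn hV hGarr
  apply le_antisymm
  · refine (Nat.sInf_le (m := Gᶜ.edgeSet.ncard) ?_).trans_eq ?_
    · exact ⟨Gᶜ, hGarr, rfl⟩
    · rw [ncard_edgeSet_compl, hV, le_antisymm hGmax hG]
  · refine le_csInf ⟨_, Gᶜ, hGarr, rfl⟩ ?_
    rintro _ ⟨F, hF, rfl⟩
    rw [← compl_compl F] at hF ⊢
    rw [ncard_edgeSet_compl, hV]
    have := ncard_edgeSet_le_of_arrows_compl hk hn hV hF
    omega
end

section
/- Let k ≥ 2 and n ≥ 3k + 3. Set R = k(n−1)+1 and R' = C(k,2)+1 if k is odd, R' = k(n−1)/2 + 1 if k is even. Let H be a graph on R + t vertices, where 0 ≤ t ≤ ⌊(kn − 2k²)/(k+1)²⌋. If e(H) ≥ R·t + C(t,2) + R', then H contains t+1 pairwise disjoint vertex subsets A₁, …, A_{t+1}, each of size k+1, such that for each i the induced subgraph H[A_i] has minimum degree at least 1. -/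
open SimpleGraph

/-!
Call a vertex set good if it induces a subgraph without isolated vertices; the proof is an
induction on `t`. If some vertex `v` has degree at least `(t + 1)(k + 1) + k`, delete it: this
costs fewer than `R + t` edges, and the `t + 1` good `(k + 1)`-sets found recursively meet at most
`(t + 1)(k + 1)` neighbours of `v`, so `v` together with `k` further neighbours is a good star.
Otherwise all degrees are small. As `e(H) > C(k, 2)`, at least `k + 1` vertices are non-isolated,
and a good `(k + 1)`-set is grown from a vertex of degree at least two, or from `(k + 1) / 2`
edges when `k` is odd and `H` is a matching (for even `k`, `R'` is large enough to rule the
matching out). Deleting this set costs at most `k + 1` times the maximum degree, which the bound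
on `t` makes affordable.
-/

open Finset

namespace SimpleGraph

variable {V : Type*} {G G' : SimpleGraph V} {A B : Finset V} {x y : V}

def InducesNoIsolated (G : SimpleGraph V) (A : Finset V) : Prop :=
  ∀ v ∈ A, ∃ u ∈ A, G.Adj v u

lemma inducesNoIsolated_pair [DecidableEq V] (h : G.Adj x y) : G.InducesNoIsolated {x, y} := by
  intro v hv
  rcases mem_insert.1 hv with rfl | hv
  · exact ⟨y, by simp, h⟩
  · rw [mem_singleton.1 hv]
    exact ⟨x, by simp, h.symm⟩

namespace InducesNoIsolated

lemma mono (hGG' : G ≤ G') (hA : G.InducesNoIsolated A) : G'.InducesNoIsolated A := fun v hv =>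
  let ⟨u, hu, hvu⟩ := hA v hv
  ⟨u, hu, hGG' hvu⟩

lemma union [DecidableEq V] (hA : G.InducesNoIsolated A) (hB : G.InducesNoIsolated B) :
    G.InducesNoIsolated (A ∪ B) := by
  intro v hv
  rcases mem_union.1 hv with hv | hv
  · obtain ⟨u, hu, hvu⟩ := hA v hv
    exact ⟨u, mem_union_left _ hu, hvu⟩
  · obtain ⟨u, hu, hvu⟩ := hB v hv
    exact ⟨u, mem_union_right _ hu, hvu⟩

lemma insert_of_adj [DecidableEq V] (hA : G.InducesNoIsolated A) (hy : y ∈ A) (hxy : G.Adj x y) :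
    G.InducesNoIsolated (insert x A) := by
  intro v hv
  rcases mem_insert.1 hv with rfl | hv
  · exact ⟨y, mem_insert_of_mem hy, hxy⟩
  · obtain ⟨u, hu, hvu⟩ := hA v hv
    exact ⟨u, mem_insert_of_mem hu, hvu⟩

lemma insert_insert [DecidableEq V] (hA : G.InducesNoIsolated A) (hxy : G.Adj x y) :
    G.InducesNoIsolated (insert x (insert y A)) := by
  simpa only [insert_union, ← insert_eq] using (inducesNoIsolated_pair hxy).union hA

lemma coe_subset_support (hA : G.InducesNoIsolated A) : (A : Set V) ⊆ G.support := fun v hv =>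
  let ⟨u, _, hvu⟩ := hA v hv
  ⟨u, hvu⟩

end InducesNoIsolated

def deleteIncidenceSets (G : SimpleGraph V) (A : Finset V) : SimpleGraph V :=
  G.deleteEdges (⋃ a ∈ A, G.incidenceSet a)

lemma deleteIncidenceSets_adj :
    (G.deleteIncidenceSets A).Adj x y ↔ G.Adj x y ∧ x ∉ A ∧ y ∉ A := by
  simp only [deleteIncidenceSets, deleteEdges_adj, Set.mem_iUnion, mk'_mem_incidenceSet_iff]
  grind

lemma deleteIncidenceSets_le : G.deleteIncidenceSets A ≤ G := deleteEdges_le _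

lemma InducesNoIsolated.disjoint_of_deleteIncidenceSets
    (hB : (G.deleteIncidenceSets A).InducesNoIsolated B) : Disjoint A B :=
  Finset.disjoint_right.2 fun v hv => by
    obtain ⟨u, -, hvu⟩ := hB v hv
    exact (deleteIncidenceSets_adj.1 hvu).2.1

def IsPacking (G : SimpleGraph V) (s : ℕ) {p : ℕ} (A : Fin p → Finset V) : Prop :=
  (Pairwise fun i j => Disjoint (A i) (A j)) ∧ ∀ i, #(A i) = s ∧ G.InducesNoIsolated (A i)

lemma IsPacking.cons {s p : ℕ} {A : Fin p → Finset V} (hGG' : G' ≤ G) (hA : G'.IsPacking s A)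
    (hB : G.InducesNoIsolated B) (hBs : #B = s) (hBA : ∀ i, Disjoint B (A i)) :
    G.IsPacking s (Fin.cons B A : Fin (p + 1) → Finset V) := by
  refine ⟨fun i j hij => ?_, fun i => ?_⟩
  · cases i using Fin.cases <;> cases j using Fin.cases
    · exact absurd rfl hij
    · simpa using hBA _
    · simpa using (hBA _).symm
    · simpa using hA.1 fun h => hij (congrArg Fin.succ h)
  · cases i using Fin.cases
    · simpa using ⟨hBs, hB⟩
    · simpa using ⟨(hA.2 _).1, (hA.2 _).2.mono hGG'⟩

section Finite

variable [Fintype V]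

open scoped Classical

lemma degree_lt_card_support {v : V} (hv : v ∈ G.support) :
    G.degree v < #G.support.toFinset := by
  calc G.degree v = #(G.neighborFinset v) := (card_neighborFinset_eq_degree G v).symm
    _ ≤ #(G.support.toFinset.erase v) := card_le_card fun u hu => by
        rw [mem_neighborFinset] at hu
        exact mem_erase.2 ⟨(G.ne_of_adj hu).symm, Set.mem_toFinset.2 ⟨v, hu.symm⟩⟩
    _ < #G.support.toFinset := card_erase_lt_of_mem (Set.mem_toFinset.2 hv)

lemma card_edgeFinset_le_choose_card_support :
    #G.edgeFinset ≤ (#G.support.toFinset).choose 2 := by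
  rw [← card_edgeFinset_induce_support, Set.toFinset_card]
  exact card_edgeFinset_le_card_choose_two

lemma exists_two_le_degree_of_card_support_lt (h : #G.support.toFinset < 2 * #G.edgeFinset) :
    ∃ v, 2 ≤ G.degree v := by
  by_contra! hdeg
  have hsum : ∑ v ∈ G.support.toFinset, G.degree v = 2 * #G.edgeFinset :=
    G.sum_degrees_support_eq_twice_card_edges
  have := sum_le_card_nsmul _ _ 1 fun v (_ : v ∈ G.support.toFinset) => Nat.le_of_lt_succ (hdeg v)
  simp only [smul_eq_mul, mul_one] at this
  omega

-- Adding a whole edge may overshoot `m` by one; removing `r` repairs this at the end.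
lemma exists_inducesNoIsolated_erase_of_two_le_degree {v : V} (hv : 2 ≤ G.degree v) {m : ℕ}
    (hm : 3 ≤ m) (hmG : m ≤ #G.support.toFinset) :
    ∃ A, ∃ r ∈ A, G.InducesNoIsolated A ∧ G.InducesNoIsolated (A.erase r) ∧
      m ≤ #A ∧ #A ≤ m + 1 := by
  induction m, hm using Nat.le_induction with
  | base =>
    obtain ⟨a, ha, b, hb, hab⟩ :=
      one_lt_card.1 (by rwa [card_neighborFinset_eq_degree] : 1 < #(G.neighborFinset v))
    rw [mem_neighborFinset] at ha hb
    have hb' : b ∉ ({v, a} : Finset V) := by simp [hab.symm, (G.ne_of_adj hb).symm]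
    refine ⟨insert b {v, a}, b, mem_insert_self _ _,
      (inducesNoIsolated_pair ha).insert_of_adj (mem_insert_self _ _) hb.symm, ?_, ?_, ?_⟩
    · rw [erase_insert hb']
      exact inducesNoIsolated_pair ha
    all_goals rw [card_insert_of_notMem hb', card_pair (G.ne_of_adj ha)] <;> omega
  | succ m _ ih =>
    obtain ⟨A, r, hr, hA, hAr, hmA, hAm⟩ := ih (by omega)
    by_cases hAm' : m + 1 ≤ #A
    · exact ⟨A, r, hr, hA, hAr, hAm', by omega⟩
    obtain ⟨x, hxG, hxA⟩ : ∃ x ∈ G.support.toFinset, x ∉ A :=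
      not_subset.1 fun h => by have := card_le_card h; omega
    obtain ⟨y, hxy⟩ := Set.mem_toFinset.1 hxG
    by_cases hyA : y ∈ A
    · refine ⟨insert x A, x, mem_insert_self _ _, hA.insert_of_adj hyA hxy, ?_, ?_, ?_⟩
      · rwa [erase_insert hxA]
      all_goals rw [card_insert_of_notMem hxA]; omega
    · have hxyA : x ∉ insert y A := by simp [G.ne_of_adj hxy, hxA]
      have hrx : r ≠ x := by rintro rfl; exact hxA hr
      have hry : r ≠ y := by rintro rfl; exact hyA hr
      refine ⟨insert x (insert y A), r, mem_insert_of_mem (mem_insert_of_mem hr),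
        hA.insert_insert hxy, ?_, ?_, ?_⟩
      · rw [erase_insert_of_ne hrx.symm, erase_insert_of_ne hry.symm]
        exact hAr.insert_insert hxy
      all_goals rw [card_insert_of_notMem hxyA, card_insert_of_notMem hyA]; omega

lemma exists_inducesNoIsolated_of_two_le_degree {v : V} (hv : 2 ≤ G.degree v) {m : ℕ}
    (hm : 3 ≤ m) (hmG : m ≤ #G.support.toFinset) :
    ∃ A, G.InducesNoIsolated A ∧ #A = m := by
  obtain ⟨A, r, hr, hA, hAr, hmA, hAm⟩ :=
    exists_inducesNoIsolated_erase_of_two_le_degree hv hm hmG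
  rcases hmA.eq_or_lt with hmA | hmA
  · exact ⟨A, hA, hmA.symm⟩
  · exact ⟨A.erase r, hAr, by rw [card_erase_of_mem hr]; omega⟩

lemma exists_inducesNoIsolated_two_mul (hdeg : ∀ v, G.degree v ≤ 1) {j : ℕ}
    (hj : 2 * j ≤ #G.support.toFinset) : ∃ A, G.InducesNoIsolated A ∧ #A = 2 * j := by
  induction j with
  | zero => exact ⟨∅, fun v hv => absurd hv (notMem_empty v), rfl⟩
  | succ j ih =>
    obtain ⟨A, hA, hAj⟩ := ih (by omega)
    obtain ⟨x, hxG, hxA⟩ : ∃ x ∈ G.support.toFinset, x ∉ A :=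
      not_subset.1 fun h => by have := card_le_card h; omega
    obtain ⟨y, hxy⟩ := Set.mem_toFinset.1 hxG
    -- a vertex of `A` already has its only neighbour inside `A`
    have hyA : y ∉ A := by
      intro hyA
      obtain ⟨z, hz, hyz⟩ := hA y hyA
      have hxz : x ≠ z := by rintro rfl; exact hxA hz
      have := hdeg y
      rw [← card_neighborFinset_eq_degree, card_le_one] at this
      exact hxz (this x (by simpa using hxy.symm) z (by simpa using hyz))
    have hxyA : x ∉ insert y A := by simp [G.ne_of_adj hxy, hxA]
    refine ⟨insert x (insert y A), hA.insert_insert hxy, ?_⟩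
    rw [card_insert_of_notMem hxyA, card_insert_of_notMem hyA, hAj]
    ring

lemma exists_inducesNoIsolated_card_succ {k : ℕ} (hk : 2 ≤ k) (he : k.choose 2 < #G.edgeFinset)
    (hpar : ¬Odd k → #G.support.toFinset < 2 * #G.edgeFinset) :
    ∃ A, G.InducesNoIsolated A ∧ #A = k + 1 := by
  have hkG : k + 1 ≤ #G.support.toFinset := by
    by_contra! h
    have := Nat.choose_le_choose 2 (Nat.le_of_lt_succ h)
    have := G.card_edgeFinset_le_choose_card_support
    omega
  by_cases h2 : ∃ v, 2 ≤ G.degree v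
  · obtain ⟨v, hv⟩ := h2
    exact exists_inducesNoIsolated_of_two_le_degree hv (by omega) hkG
  · obtain ⟨j, hj⟩ : Odd k :=
      by_contra fun hev => h2 (exists_two_le_degree_of_card_support_lt (hpar hev))
    push Not at h2
    obtain ⟨A, hA, hAj⟩ := exists_inducesNoIsolated_two_mul (G := G) (j := j + 1)
      (fun v => Nat.le_of_lt_succ (h2 v)) (by omega)
    exact ⟨A, hA, by omega⟩

lemma card_support_deleteIncidenceSets_add_card (hA : (A : Set V) ⊆ G.support) :
    #(G.deleteIncidenceSets A).support.toFinset + #A ≤ #G.support.toFinset := by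
  have hsub : (G.deleteIncidenceSets A).support.toFinset ⊆ G.support.toFinset \ A :=
    fun v hv => by
      obtain ⟨u, hvu⟩ := (mem_support _).1 (Set.mem_toFinset.1 hv)
      rw [deleteIncidenceSets_adj] at hvu
      exact mem_sdiff.2 ⟨Set.mem_toFinset.2 ⟨u, hvu.1⟩, hvu.2.1⟩
  have := card_le_card hsub
  rw [card_sdiff_of_subset fun v hv => Set.mem_toFinset.2 (hA hv)] at this
  have := card_le_card fun v hv => Set.mem_toFinset.2 (hA (mem_coe.2 hv))
  omega

lemma card_edgeFinset_le_deleteIncidenceSets_add_sum_degree :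
    #G.edgeFinset ≤ #(G.deleteIncidenceSets A).edgeFinset + ∑ a ∈ A, G.degree a := by
  calc #G.edgeFinset
      ≤ #((G.deleteIncidenceSets A).edgeFinset ∪ A.biUnion fun a => G.incidenceFinset a) := by
        refine card_le_card fun e he => ?_
        by_cases h : e ∈ ⋃ a ∈ A, G.incidenceSet a
        · obtain ⟨a, ha, hea⟩ := by simpa only [Set.mem_iUnion, exists_prop] using h
          exact mem_union_right _ (mem_biUnion.2 ⟨a, ha, by simpa using hea⟩)
        · refine mem_union_left _ ?_
          rw [mem_edgeFinset, deleteIncidenceSets, edgeSet_deleteEdges]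
          exact ⟨mem_edgeFinset.1 he, h⟩
    _ ≤ #(G.deleteIncidenceSets A).edgeFinset + #(A.biUnion fun a => G.incidenceFinset a) :=
        card_union_le _ _
    _ ≤ #(G.deleteIncidenceSets A).edgeFinset + ∑ a ∈ A, G.degree a := by
        gcongr
        exact card_biUnion_le.trans_eq (sum_congr rfl fun a _ => G.card_incidenceFinset_eq_degree a)

lemma exists_inducesNoIsolated_disjoint_of_degree {v : V} {k : ℕ} (hk : 1 ≤ k) {U : Finset V}
    (hvU : v ∉ U) (hdeg : #U + k ≤ G.degree v) :
    ∃ B, G.InducesNoIsolated B ∧ #B = k + 1 ∧ Disjoint B U := by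
  have hfree : k ≤ #(G.neighborFinset v \ U) := by
    have := le_card_sdiff U (G.neighborFinset v)
    rw [card_neighborFinset_eq_degree] at this
    omega
  obtain ⟨S, hS, hSk⟩ := exists_subset_card_eq hfree
  have hSv : ∀ s ∈ S, G.Adj v s ∧ s ∉ U := fun s hs => by
    simpa using hS hs
  have hvS : v ∉ S := fun h => G.loopless.irrefl v (hSv v h).1
  obtain ⟨s, hs⟩ := card_pos.1 (by omega : 0 < #S)
  refine ⟨insert v S, ?_, by rw [card_insert_of_notMem hvS, hSk], ?_⟩
  · intro w hw
    rcases mem_insert.1 hw with rfl | hw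
    · exact ⟨s, mem_insert_of_mem hs, (hSv s hs).1⟩
    · exact ⟨v, mem_insert_self _ _, (hSv w hw).1.symm⟩
  · exact disjoint_insert_left.2 ⟨hvU, Finset.disjoint_left.2 fun w hw => (hSv w hw).2⟩

lemma IsPacking.exists_cons_of_degree {k p : ℕ} (hk : 1 ≤ k) {v : V} {A : Fin p → Finset V}
    (hA : (G.deleteIncidenceSets {v}).IsPacking (k + 1) A) (hdeg : p * (k + 1) + k ≤ G.degree v) :
    ∃ A' : Fin (p + 1) → Finset V, G.IsPacking (k + 1) A' := by
  set U := univ.biUnion A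
  have hU : #U ≤ p * (k + 1) := card_biUnion_le.trans_eq (by simp [(hA.2 _).1])
  have hvU : v ∉ U := by
    simp only [U, mem_biUnion, mem_univ, true_and, not_exists]
    exact fun i => Finset.disjoint_left.1 (hA.2 i).2.disjoint_of_deleteIncidenceSets
      (mem_singleton_self v)
  obtain ⟨B, hB, hBk, hBU⟩ :=
    exists_inducesNoIsolated_disjoint_of_degree (G := G) hk hvU (by omega)
  exact ⟨_, hA.cons deleteIncidenceSets_le hB hBk fun i =>
    hBU.mono_right (subset_biUnion_of_mem A (mem_univ i))⟩

-- Deleting a vertex set is modelled by deleting the edges at it, so the vertex type stays fixed and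
-- `N + p` bounds the number of non-isolated vertices instead.
theorem exists_isPacking {k R : ℕ} (hk : 2 ≤ k) (hR : k.choose 2 < R) (p : ℕ)
    (G : SimpleGraph V) (N : ℕ) (hS : #G.support.toFinset ≤ N + p)
    (hN : p * (k + 1) ^ 2 + k ^ 2 ≤ N + p) (he : N * p + p.choose 2 + R ≤ #G.edgeFinset)
    (hpar : ¬Odd k → #G.support.toFinset + 1 ≤ 2 * R + p) :
    ∃ A : Fin (p + 1) → Finset V, G.IsPacking (k + 1) A := by
  induction p generalizing G N with
  | zero =>
    simp only [mul_zero, zero_add, Nat.choose_zero_succ, add_zero] at he hpar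
    obtain ⟨B, hB, hBk⟩ := exists_inducesNoIsolated_card_succ hk (hR.trans_le he)
      fun hev => by have := hpar hev; omega
    exact ⟨fun _ => B, fun i j hij => absurd (Subsingleton.elim (α := Fin 1) i j) hij,
      fun _ => ⟨hBk, hB⟩⟩
  | succ p ih =>
    have hchoose : (p + 1).choose 2 = p.choose 2 + p := by
      rw [Nat.choose_succ_succ, Nat.choose_one_right, add_comm]
    have hsq : (p + 1) * (k + 1) ^ 2 = p * (k + 1) ^ 2 + (k + 1) ^ 2 := by ring
    have hk2 : k + 2 ≤ (k + 1) ^ 2 := by nlinarith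
    have hNp : N * (p + 1) = N * p + N := Nat.mul_succ N p
    by_cases hdeg : ∃ v, (p + 1) * (k + 1) + k ≤ G.degree v
    · obtain ⟨v, hv⟩ := hdeg
      have hvG : v ∈ G.support := (G.degree_pos_iff_mem_support v).1 (by omega)
      have hv' := G.degree_lt_card_support hvG
      have hS' := card_support_deleteIncidenceSets_add_card (A := {v}) (by simpa using hvG)
      have hE := card_edgeFinset_le_deleteIncidenceSets_add_sum_degree (G := G) (A := {v})
      rw [card_singleton] at hS'
      rw [sum_singleton] at hE
      obtain ⟨A, hA⟩ := ih (G.deleteIncidenceSets {v}) N (by omega) (by omega) (by omega)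
        fun hev => by have := hpar hev; omega
      exact hA.exists_cons_of_degree (by omega) hv
    · push Not at hdeg
      have hNp' : N ≤ N * (p + 1) := Nat.le_mul_of_pos_right N (by omega)
      have hpk : p ≤ p * (k + 1) ^ 2 := Nat.le_mul_of_pos_right p (by positivity)
      obtain ⟨B, hB, hBk⟩ := exists_inducesNoIsolated_card_succ (G := G) hk (by omega)
        fun hev => by have := hpar hev; omega
      have hS' := card_support_deleteIncidenceSets_add_card hB.coe_subset_support
      have hE := card_edgeFinset_le_deleteIncidenceSets_add_sum_degree (G := G) (A := B)
      have hsum : ∑ b ∈ B, G.degree b + (k + 1) ≤ (p + 1) * (k + 1) ^ 2 + k ^ 2 + k := by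
        have := sum_le_card_nsmul B (fun b => G.degree b + 1) _ fun b _ => hdeg b
        rw [sum_add_distrib, sum_const, hBk, smul_eq_mul, smul_eq_mul, mul_one] at this
        have hD : (k + 1) * ((p + 1) * (k + 1) + k) = (p + 1) * (k + 1) ^ 2 + k ^ 2 + k := by ring
        omega
      have hNk : N * p = (N - k) * p + k * p := by rw [← add_mul]; congr 1; omega
      obtain ⟨A, hA⟩ := ih (G.deleteIncidenceSets B) (N - k) (by omega) (by omega) (by omega)
        fun hev => by have := hpar hev; omega
      exact ⟨_, hA.cons deleteIncidenceSets_le hB hBk fun i =>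
        (hA.2 i).2.disjoint_of_deleteIncidenceSets⟩

theorem exists_pairwise_disjoint_of_card {k R N t : ℕ} (hk : 2 ≤ k) (hR : k.choose 2 < R)
    (G : SimpleGraph V) (hcard : Fintype.card V = N + t) (hN : t * (k + 1) ^ 2 + k ^ 2 ≤ N + t)
    (he : N * t + t.choose 2 + R ≤ G.edgeSet.ncard) (hpar : ¬Odd k → N + 1 ≤ 2 * R) :
    ∃ A : Fin (t + 1) → Set V, (Pairwise fun i j => Disjoint (A i) (A j)) ∧
      (∀ i, (A i).ncard = k + 1) ∧ ∀ i, ∀ v ∈ A i, ∃ u ∈ A i, G.Adj v u := by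
  have hS : #G.support.toFinset ≤ N + t := hcard ▸ card_le_univ _
  have hedges : G.edgeSet.ncard = #G.edgeFinset := by
    rw [Set.ncard_eq_toFinset_card', Set.toFinset_card, ← edgeFinset_card]
  obtain ⟨A, hdisj, hA⟩ := exists_isPacking hk hR t G N hS hN (hedges ▸ he)
    fun hev => by have := hpar hev; omega
  exact ⟨fun i => A i, fun i j hij => disjoint_coe.2 (hdisj hij),
    fun i => by simp [(hA i).1], fun i => (hA i).2⟩

end Finite

end SimpleGraph

theorem stmt12 {V : Type*} [Fintype V] (k n t : ℕ) (hk : 2 ≤ k) (hn : 3*k + 3 ≤ n)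
    (ht : t ≤ (k*n - 2*k^2) / (k+1)^2)
    (H : SimpleGraph V) (hcard : Fintype.card V = (k*(n-1)+1) + t)
    (he : (k*(n-1)+1) * t + t.choose 2 +
        (if Odd k then k.choose 2 + 1 else k*(n-1)/2 + 1) ≤ H.edgeSet.ncard) :
    ∃ A : Fin (t+1) → Set V,
      (Pairwise fun i j => Disjoint (A i) (A j)) ∧
      (∀ i, (A i).ncard = k + 1) ∧
      (∀ i, ∀ v ∈ A i, ∃ u ∈ A i, H.Adj v u) := by
  set R' := if Odd k then k.choose 2 + 1 else k * (n - 1) / 2 + 1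
  have hR' : k.choose 2 < R' := by
    have : k.choose 2 ≤ k * (n - 1) / 2 := by
      rw [Nat.choose_two_right]
      exact Nat.div_le_div_right (Nat.mul_le_mul_left k (by omega))
    simp only [R']
    split_ifs <;> omega
  have hkn : k * (n - 1) + k = k * n := by rw [← Nat.mul_succ]; congr 1; omega
  have hkk : k ≤ k ^ 2 := Nat.le_self_pow two_ne_zero k
  have h2kn : 2 * k ^ 2 ≤ k * n := by nlinarith
  have htk : t * (k + 1) ^ 2 ≤ k * n - 2 * k ^ 2 := (Nat.le_div_iff_mul_le (by positivity)).1 ht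
  refine exists_pairwise_disjoint_of_card hk hR' H hcard (by omega) he fun hev => ?_
  have := Nat.div_mul_cancel ((Nat.not_odd_iff_even.1 hev).mul_right (n - 1)).two_dvd
  simp only [R', if_neg hev]
  omega
end

section
/- Let k ≥ 2, n ≥ 3, and let G be a graph with G → (K_{1,k}, K_n). If T ⊆ V(G) is such that the induced subgraph G[V(G) \ T] has maximum degree less than k, then the induced subgraph G[T] arrows (K_{1,k}, K_{n−1}): G[T] → (K_{1,k}, K_{n−1}). Consequently |T| ≥ r(K_{1,k}, K_{n−1}) = k(n−2)+1. -/
open SimpleGraph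

/-! Given a red/blue colouring `R` of `G[T]`, colour `G` by `R` on `T`, red on every edge outside
`T`, and blue between `T` and its complement. A red `K_{1,k}` cannot be centred outside `T`,
where red degrees are below `k`, so it is a red star of `R`. A blue `K_n` meets the complement of
`T`, which spans no blue edge, in at most one vertex, so it leaves a blue `K_{n-1}` in `G[T]`. -/

theorem containsCopy_iff_isContained {α β : Type*} {A : SimpleGraph α} {B : SimpleGraph β} :
    ContainsCopy A B ↔ A ⊑ B :=
  ⟨fun ⟨f, hf⟩ ↦ ⟨⟨f, hf⟩⟩, fun ⟨c⟩ ↦ ⟨c.toHom, c.injective⟩⟩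

theorem arrows_iff {γ α β : Type*} {F : SimpleGraph γ} {A : SimpleGraph α} {B : SimpleGraph β} :
    Arrows F A B ↔ ∀ R ≤ F, A ⊑ R ∨ B ⊑ F \ R := by
  simp only [Arrows, containsCopy_iff_isContained]

theorem starGraph_isContained_iff {β : Type*} [Finite β] {B : SimpleGraph β} {k : ℕ} :
    _root_.starGraph k ⊑ B ↔ ∃ v, k ≤ (B.neighborSet v).ncard := by
  constructor
  · rintro ⟨c⟩
    refine ⟨c (.inl 0), ?_⟩
    have hleaves : Set.range (c ∘ Sum.inr) ⊆ B.neighborSet (c (.inl 0)) := by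
      rintro _ ⟨i, rfl⟩
      exact c.toHom.map_adj (by simp [_root_.starGraph])
    have hinj : Function.Injective (c ∘ Sum.inr) := c.injective.comp Sum.inr_injective
    calc k = (Set.range (c ∘ Sum.inr)).ncard := by
          rw [Set.ncard_range_of_injective hinj, Nat.card_fin]
      _ ≤ _ := Set.ncard_le_ncard hleaves
  · rintro ⟨v, hv⟩
    obtain ⟨t, hts, htk⟩ := Set.exists_subset_card_eq hv
    let e : t ≃ Fin k := Finite.equivFinOfCardEq htk
    have hadj (i : Fin k) : B.Adj v (e.symm i) := hts (e.symm i).2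
    refine ⟨⟨⟨Sum.elim (fun _ ↦ v) (fun i ↦ e.symm i), ?_⟩, ?_⟩⟩
    · rintro (a | a) (b | b) hab
      · simp [_root_.starGraph] at hab
      · exact hadj b
      · exact (hadj a).symm
      · simp [_root_.starGraph] at hab
    · rintro (a | a) (b | b) hab <;>
        simp only [RelHom.coeFn_mk, Sum.elim_inl, Sum.elim_inr] at hab
      · rw [Subsingleton.elim a b]
      · exact absurd (hab ▸ hadj b) B.irrefl
      · exact absurd (hab ▸ hadj a) B.irrefl
      · rw [e.symm.injective (Subtype.ext hab)]

theorem top_isContained_induce_of_isIndepSet_compl {β : Type*} {B : SimpleGraph β} {T : Set β}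
    {n : ℕ} (hT : B.IsIndepSet Tᶜ) (h : (⊤ : SimpleGraph (Fin (n + 1))) ⊑ B) :
    (⊤ : SimpleGraph (Fin n)) ⊑ B.induce T := by
  obtain ⟨c⟩ := h
  obtain ⟨i₀, hi₀⟩ : ∃ i₀, ∀ j ≠ i₀, c j ∈ T := by
    by_cases hin : ∀ i, c i ∈ T
    · exact ⟨0, fun j _ ↦ hin j⟩
    · obtain ⟨i, hi⟩ := not_forall.1 hin
      exact ⟨i, fun j hji ↦ by_contra fun hj ↦
        hT hi hj (c.injective.ne hji.symm) (c.toHom.map_adj hji.symm)⟩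
  have hmem (j : Fin n) : c (i₀.succAbove j) ∈ T := hi₀ _ (Fin.succAbove_ne i₀ j)
  refine ⟨⟨⟨fun j ↦ ⟨c (i₀.succAbove j), hmem j⟩, fun {a b} hab ↦ ?_⟩, fun a b hab ↦ ?_⟩⟩
  · exact c.toHom.map_adj (Fin.succAbove_right_injective.ne hab)
  · exact Fin.succAbove_right_injective (c.injective (congrArg Subtype.val hab))

section extendColoring

variable {V : Type*} (G : SimpleGraph V) (T : Set V) (R : SimpleGraph T)

def extendColoring : SimpleGraph V where
  Adj u v := (∃ (hu : u ∈ T) (hv : v ∈ T), R.Adj ⟨u, hu⟩ ⟨v, hv⟩) ∨ (G.Adj u v ∧ u ∉ T ∧ v ∉ T)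
  symm := ⟨by
    rintro u v (⟨hu, hv, h⟩ | ⟨h, hu, hv⟩)
    exacts [.inl ⟨hv, hu, h.symm⟩, .inr ⟨h.symm, hv, hu⟩]⟩
  loopless := ⟨by
    rintro v (⟨_, _, h⟩ | ⟨h, _⟩)
    exacts [R.irrefl h, G.irrefl h]⟩

variable {G T R}

theorem extendColoring_le (hR : R ≤ G.induce T) : extendColoring G T R ≤ G := by
  rintro u v (⟨_, _, h⟩ | ⟨h, _⟩)
  exacts [hR h, h]

theorem isIndepSet_compl_sdiff_extendColoring : (G \ extendColoring G T R).IsIndepSet Tᶜ :=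
  fun _ hu _ hv _ h ↦ h.2 (.inr ⟨h.1, hu, hv⟩)

theorem induce_sdiff_extendColoring_le : (G \ extendColoring G T R).induce T ≤ G.induce T \ R :=
  fun u v h ↦ ⟨h.1, fun hR ↦ h.2 (.inl ⟨u.2, v.2, hR⟩)⟩

theorem neighborSet_extendColoring_of_mem {c : V} (hc : c ∈ T) :
    (extendColoring G T R).neighborSet c = Subtype.val '' R.neighborSet ⟨c, hc⟩ := by
  ext v
  simp [extendColoring, hc]

theorem neighborSet_extendColoring_subset_of_notMem {c : V} (hc : c ∉ T) :
    (extendColoring G T R).neighborSet c ⊆ G.neighborSet c ∩ Tᶜ := by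
  rintro v (⟨hc', _⟩ | ⟨h, _, hv⟩)
  exacts [absurd hc' hc, ⟨h, hv⟩]

end extendColoring

theorem arrows_induce_of_arrows {V : Type*} [Finite V] {G : SimpleGraph V} {T : Set V}
    {k n : ℕ}
    (hG : Arrows G (_root_.starGraph k) (⊤ : SimpleGraph (Fin (n + 1))))
    (hT : ∀ v ∉ T, (G.neighborSet v ∩ Tᶜ).ncard < k) :
    Arrows (G.induce T) (_root_.starGraph k) (⊤ : SimpleGraph (Fin n)) := by
  rw [arrows_iff] at hG ⊢
  intro R hR
  rcases hG (extendColoring G T R) (extendColoring_le hR) with hred | hblue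
  · left
    obtain ⟨c, hc⟩ := starGraph_isContained_iff.1 hred
    by_cases hcT : c ∈ T
    · rw [neighborSet_extendColoring_of_mem hcT,
        Set.ncard_image_of_injective _ Subtype.val_injective] at hc
      exact starGraph_isContained_iff.2 ⟨_, hc⟩
    · have hsub := neighborSet_extendColoring_subset_of_notMem (G := G) (R := R) hcT
      exact absurd (hc.trans (Set.ncard_le_ncard hsub)) (hT c hcT).not_ge
  · right
    exact (top_isContained_induce_of_isIndepSet_compl isIndepSet_compl_sdiff_extendColoring
      hblue).mono_right induce_sdiff_extendColoring_le

theorem exists_ncard_fiber_le_of_card_le {W : Type*} [Finite W] {m k : ℕ}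
    (h : Nat.card W ≤ m * k) : ∃ p : W → Fin m, ∀ i, (p ⁻¹' {i}).ncard ≤ k := by
  let φ : W → Fin m × Fin k := finProdFinEquiv.symm ∘ Fin.castLE h ∘ Finite.equivFin W
  have hφ : Function.Injective φ :=
    finProdFinEquiv.symm.injective.comp
      ((Fin.castLE_injective h).comp (Finite.equivFin W).injective)
  refine ⟨fun w ↦ (φ w).1, fun i ↦ ?_⟩
  have hsnd : Function.Injective fun w : (fun w ↦ (φ w).1) ⁻¹' {i} ↦ (φ w).2 :=
    fun a b hab ↦ Subtype.ext (hφ (Prod.ext (a.2.trans b.2.symm) hab))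
  simpa using Nat.card_le_card_of_injective _ hsnd

/-- Colour red the edges inside the classes of a partition into `m` classes of size at most `k`:
red degrees are below `k`, and the blue graph is `m`-colourable. -/
theorem mul_lt_card_of_arrows {W : Type*} [Finite W] {F : SimpleGraph W} {k m : ℕ}
    (hF : Arrows F (_root_.starGraph k) (⊤ : SimpleGraph (Fin (m + 1)))) :
    m * k < Nat.card W := by
  by_contra! h
  obtain ⟨p, hp⟩ := exists_ncard_fiber_le_of_card_le h
  let B : SimpleGraph W := F ⊓ (⊤ : SimpleGraph (Fin m)).comap p
  rcases arrows_iff.1 hF (F \ B) sdiff_le with hred | hblue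
  · obtain ⟨v, hv⟩ := starGraph_isContained_iff.1 hred
    have hsub : (F \ B).neighborSet v ⊆ p ⁻¹' {p v} \ {v} := by
      intro w ⟨hvw, hB⟩
      exact ⟨(not_not.1 fun hne ↦ hB ⟨hvw, hne⟩).symm, hvw.ne'⟩
    exact lt_irrefl k <| calc
      k ≤ ((F \ B).neighborSet v).ncard := hv
      _ ≤ (p ⁻¹' {p v} \ {v}).ncard := Set.ncard_le_ncard hsub
      _ < (p ⁻¹' {p v}).ncard := Set.ncard_sdiff_singleton_lt_of_mem rfl
      _ ≤ k := hp (p v)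
  · rw [sdiff_sdiff_right_self] at hblue
    have hcol : B.Colorable m := ⟨Coloring.mk p fun h ↦ h.2⟩
    exact (not_cliqueFree_iff_top_isContained _).2 hblue
      ((hcol.mono_left inf_le_right).cliqueFree (Nat.lt_succ_self m))

theorem stmt15_general {V : Type*} [Fintype V] (k n : ℕ) (hn : 3 ≤ n)
    (G : SimpleGraph V) (hG : Arrows G (_root_.starGraph k) (⊤ : SimpleGraph (Fin n)))
    (T : Set V) (hT : ∀ v ∉ T, ((G.neighborSet v) ∩ Tᶜ).ncard < k) :
    Arrows (G.induce T) (_root_.starGraph k) (⊤ : SimpleGraph (Fin (n-1))) ∧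
      k*(n-2)+1 ≤ T.ncard := by
  obtain ⟨m, rfl⟩ : ∃ m, n = m + 2 := ⟨n - 2, by omega⟩
  have hind : Arrows (G.induce T) (_root_.starGraph k) (⊤ : SimpleGraph (Fin (m + 1))) :=
    arrows_induce_of_arrows hG hT
  refine ⟨hind, ?_⟩
  simpa [Nat.mul_comm] using mul_lt_card_of_arrows hind

theorem stmt15 {V : Type*} [Fintype V] (k n : ℕ) (hk : 2 ≤ k) (hn : 3 ≤ n)
    (G : SimpleGraph V) (hG : Arrows G (_root_.starGraph k) (⊤ : SimpleGraph (Fin n)))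
    (T : Set V) (hT : ∀ v ∉ T, ((G.neighborSet v) ∩ Tᶜ).ncard < k) :
    Arrows (G.induce T) (_root_.starGraph k) (⊤ : SimpleGraph (Fin (n-1))) ∧
      k*(n-2)+1 ≤ T.ncard :=
  stmt15_general k n hn G hG T hT
end
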